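/- arXiv:2402.16067 — 5 statements merged into one kernel-verified Lean document; each statement's English description precedes it below -/
import Mathlib

section
/- Let $H, K$ be Hermitian $m\times m$ matrices with $HK \ne KH$, and define the $2m\times 2m$ block-diagonal Hermitian matrices $H_1 := H \oplus H$, $H_2 := (-H)\oplus(-K)$, $H_3 := K \oplus K$. Then $\mathrm{Tr}\, e^{H_1+H_2+H_3} = \mathrm{Tr}\, e^{H_1} e^{H_2} e^{H_3}$, even though no two of $H_1, H_2, H_3$ commute. -/
open scoped Matrix.Norms.L2Operator
open scoped Matrix
open scoped ComplexOrder

namespace Paper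

variable {n : Type*} [Fintype n] [DecidableEq n]

/-- Apply a real function to a Hermitian matrix via its spectral decomposition
(junk value `0` if the matrix is not Hermitian). -/
noncomputable def mfun (f : ℝ → ℝ) (A : Matrix n n ℂ) : Matrix n n ℂ :=
  if hA : A.IsHermitian then
    (hA.eigenvectorUnitary : Matrix n n ℂ) *
      Matrix.diagonal (fun i => (f (hA.eigenvalues i) : ℂ)) *
      (hA.eigenvectorUnitary : Matrix n n ℂ)ᴴ
  else 0

/-- Real power of a positive semidefinite matrix via functional calculus
(with the convention `0 ^ r = 0` for `r ≠ 0`). -/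
noncomputable def mpow (A : Matrix n n ℂ) (r : ℝ) : Matrix n n ℂ :=
  mfun (fun x => x ^ r) A

/-- Matrix logarithm via functional calculus (with `log 0 := 0`). -/
noncomputable def mlog (A : Matrix n n ℂ) : Matrix n n ℂ :=
  mfun Real.log A

/-- Matrix exponential of a Hermitian matrix via functional calculus. -/
noncomputable def mexp (A : Matrix n n ℂ) : Matrix n n ℂ :=
  mfun Real.exp A

/-- The eigenvalues of a Hermitian `m × m` matrix arranged in decreasing order
counting multiplicities (junk value `0` if not Hermitian). -/
noncomputable def eigDec {m : ℕ} (A : Matrix (Fin m) (Fin m) ℂ) : Fin m → ℝ :=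
  if hA : A.IsHermitian then
    fun i => hA.eigenvalues (Tuple.sort hA.eigenvalues i.rev)
  else 0

/-- `|X| ^ r = (Xᴴ X) ^ (r/2)`, the `r`-th power of the absolute value of a matrix. -/
noncomputable def absPow (X : Matrix n n ℂ) (r : ℝ) : Matrix n n ℂ :=
  mpow (Xᴴ * X) (r / 2)

/-- The quantity `Q_{α,z}(ρ‖σ) = Tr (ρ^{α/2z} σ^{(1-α)/z} ρ^{α/2z})^z`. -/
noncomputable def Qaz (ρ σ : Matrix n n ℂ) (α z : ℝ) : ℝ :=
  (mpow (mpow ρ (α / (2 * z)) * mpow σ ((1 - α) / z) * mpow ρ (α / (2 * z))) z).trace.re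

/-- The `α`-`z`-Rényi divergence `D_{α,z}(ρ‖σ)`. -/
noncomputable def Daz (ρ σ : Matrix n n ℂ) (α z : ℝ) : ℝ :=
  (α - 1)⁻¹ * Real.log (Qaz ρ σ α z / ρ.trace.re)

end Paper

open Paper

open NormedSpace

lemma aux_mexp_eq_exp {n : Type*} [Fintype n] [DecidableEq n] {A : Matrix n n ℂ}
    (hA : A.IsHermitian) : mexp A = exp A := by
  set U : Matrix n n ℂ := (hA.eigenvectorUnitary : Matrix n n ℂ) with hU
  have hmem : U ∈ Matrix.unitaryGroup n ℂ := (hA.eigenvectorUnitary).2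
  have h1 : Uᴴ * U = 1 := Matrix.mem_unitaryGroup_iff'.mp hmem
  have hinv : U⁻¹ = Uᴴ := Matrix.inv_eq_left_inv h1
  have hUnit : IsUnit U := by
    apply Matrix.isUnit_iff_isUnit_det _ |>.mpr
    exact IsUnit.of_mul_eq_one _ (by rw [← Matrix.det_mul, mul_eq_one_comm.mpr h1, Matrix.det_one])
  have hspec := hA.spectral_theorem
  simp only [Unitary.conjStarAlgAut_apply, Unitary.coe_star] at hspec
  rw [mexp, mfun, dif_pos hA]
  conv_rhs => rw [hspec]
  have : (star U) = U⁻¹ := by rw [hinv]; rfl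
  rw [this, Matrix.exp_conj U _ hUnit, Matrix.exp_diagonal]
  rw [hinv]
  have hdiag : (fun i => ((Real.exp (hA.eigenvalues i) : ℝ) : ℂ)) =
      exp (RCLike.ofReal ∘ hA.eigenvalues) := by
    rw [Pi.exp_def]
    funext i
    simp only [Function.comp_apply]
    rw [← Complex.exp_eq_exp_ℂ]
    exact Complex.ofReal_exp _
  rw [hdiag]

lemma aux_exp_fromBlocks {n : Type*} [Fintype n] [DecidableEq n] (A B : Matrix n n ℂ) :
    exp (Matrix.fromBlocks A 0 0 B : Matrix (n ⊕ n) (n ⊕ n) ℂ) =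
      Matrix.fromBlocks (exp A) 0 0 (exp B) := by
  letI : SeminormedRing (Matrix n n ℂ) := Matrix.linftyOpSemiNormedRing
  letI : NormedRing (Matrix n n ℂ) := Matrix.linftyOpNormedRing
  letI : NormedAlgebra ℂ (Matrix n n ℂ) := Matrix.linftyOpNormedAlgebra
  letI : NormedAlgebra ℚ (Matrix n n ℂ) := Matrix.linftyOpNormedAlgebra
  letI : SeminormedRing (Matrix (n ⊕ n) (n ⊕ n) ℂ) := Matrix.linftyOpSemiNormedRing
  letI : NormedRing (Matrix (n ⊕ n) (n ⊕ n) ℂ) := Matrix.linftyOpNormedRing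
  letI : NormedAlgebra ℂ (Matrix (n ⊕ n) (n ⊕ n) ℂ) := Matrix.linftyOpNormedAlgebra
  letI : NormedAlgebra ℚ (Matrix (n ⊕ n) (n ⊕ n) ℂ) := Matrix.linftyOpNormedAlgebra
  let f : Matrix n n ℂ × Matrix n n ℂ →+* Matrix (n ⊕ n) (n ⊕ n) ℂ :=
    { toFun := fun p => Matrix.fromBlocks p.1 0 0 p.2
      map_one' := Matrix.fromBlocks_one
      map_mul' := fun p q => by
        simp [Matrix.fromBlocks_multiply]
      map_zero' := by simp [Matrix.fromBlocks_zero]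
      map_add' := fun p q => by simp [Matrix.fromBlocks_add] }
  have hf : Continuous f :=
    Continuous.matrix_fromBlocks continuous_fst continuous_const continuous_const continuous_snd
  have h1 := @map_exp (Matrix n n ℂ × Matrix n n ℂ) _ _ _ (by exact (inferInstanceAs (CompleteSpace ((n → n → ℂ) × (n → n → ℂ))))) _ _ _ _ _ f hf (A, B)
  have h2 : exp ((A, B) : Matrix n n ℂ × Matrix n n ℂ) = (exp A, exp B) := by
    ext1
    · exact @map_exp (Matrix n n ℂ × Matrix n n ℂ) _ _ _ (by exact (inferInstanceAs (CompleteSpace ((n → n → ℂ) × (n → n → ℂ))))) _ _ _ _ _ (RingHom.fst _ _) continuous_fst (A, B)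
    · exact @map_exp (Matrix n n ℂ × Matrix n n ℂ) _ _ _ (by exact (inferInstanceAs (CompleteSpace ((n → n → ℂ) × (n → n → ℂ))))) _ _ _ _ _ (RingHom.snd _ _) continuous_snd (A, B)
  erw [h2] at h1
  exact h1.symm

lemma aux_trace_fromBlocks {n : Type*} [Fintype n] (A B C D : Matrix n n ℂ) :
    (Matrix.fromBlocks A B C D).trace = A.trace + D.trace := by
  simp [Matrix.trace, Matrix.diag, Fintype.sum_sum_type, Matrix.fromBlocks]

theorem stmt7 {m : ℕ} (H K : Matrix (Fin m) (Fin m) ℂ)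
    (hH : H.IsHermitian) (hK : K.IsHermitian) (hHK : H * K ≠ K * H)
    (H₁ H₂ H₃ : Matrix (Fin m ⊕ Fin m) (Fin m ⊕ Fin m) ℂ)
    (hH₁ : H₁ = Matrix.fromBlocks H 0 0 H)
    (hH₂ : H₂ = Matrix.fromBlocks (-H) 0 0 (-K))
    (hH₃ : H₃ = Matrix.fromBlocks K 0 0 K) :
    (mexp (H₁ + H₂ + H₃)).trace = (mexp H₁ * mexp H₂ * mexp H₃).trace ∧
      H₁ * H₂ ≠ H₂ * H₁ ∧ H₁ * H₃ ≠ H₃ * H₁ ∧ H₂ * H₃ ≠ H₃ * H₂ := by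
  have herm : ∀ (A B : Matrix (Fin m) (Fin m) ℂ), A.IsHermitian → B.IsHermitian →
      (Matrix.fromBlocks A 0 0 B).IsHermitian := by
    intro A B hA hB
    rw [Matrix.IsHermitian, Matrix.fromBlocks_conjTranspose]
    simp [hA.eq, hB.eq]
  have hsum : H₁ + H₂ + H₃ = Matrix.fromBlocks K 0 0 H := by
    subst hH₁ hH₂ hH₃
    simp [Matrix.fromBlocks_add]
  constructor
  · rw [hsum, hH₁, hH₂, hH₃, aux_mexp_eq_exp (herm _ _ hK hH),
      aux_mexp_eq_exp (herm _ _ hH hH), aux_mexp_eq_exp (herm _ _ hH.neg hK.neg),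
      aux_mexp_eq_exp (herm _ _ hK hK)]
    rw [aux_exp_fromBlocks, aux_exp_fromBlocks, aux_exp_fromBlocks, aux_exp_fromBlocks]
    simp only [Matrix.fromBlocks_multiply, Matrix.mul_zero, Matrix.zero_mul, add_zero, zero_add]
    have e1 : exp H * exp (-H) = 1 := by
      rw [← Matrix.exp_add_of_commute H (-H) (Commute.neg_right (Commute.refl H)),
        add_neg_cancel, exp_zero]
    have e2 : exp (-K) * exp K = 1 := by
      rw [← Matrix.exp_add_of_commute (-K) K (Commute.neg_left (Commute.refl K)),
        neg_add_cancel, exp_zero]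
    rw [aux_trace_fromBlocks, aux_trace_fromBlocks]
    rw [Matrix.mul_assoc (exp H) (exp (-K)), e2, Matrix.mul_one, e1,
      Matrix.one_mul, add_comm]
  · subst hH₁ hH₂ hH₃
    refine ⟨?_, ?_, ?_⟩ <;> intro h <;>
      simp only [Matrix.fromBlocks_multiply, Matrix.mul_zero, Matrix.zero_mul, add_zero,
        zero_add, Matrix.mul_neg, Matrix.neg_mul] at h
    · have := congrArg Matrix.toBlocks₂₂ h
      simp only [Matrix.toBlocks_fromBlocks₂₂] at this
      exact hHK (neg_injective this)
    · have := congrArg Matrix.toBlocks₂₂ h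
      simp only [Matrix.toBlocks_fromBlocks₂₂] at this
      exact hHK this
    · have := congrArg Matrix.toBlocks₁₁ h
      simp only [Matrix.toBlocks_fromBlocks₁₁] at this
      exact hHK (neg_injective this)
end

section
/- Let $A_1, \dots, A_n$ be $m\times m$ positive definite matrices and $\omega = (w_1,\dots,w_n)$ a weight vector ($w_j \ge 0$, $\sum_j w_j = 1$). If $X$ is positive definite and satisfies the Karcher equation $\sum_{j=1}^n w_j \log(X^{1/2} A_j^{-1} X^{1/2}) = 0$, then $\det X = \prod_{j=1}^n (\det A_j)^{w_j}$. -/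
open scoped Matrix.Norms.L2Operator
open scoped Matrix
open scoped ComplexOrder

namespace Paper

variable {n : Type*} [Fintype n] [DecidableEq n]

section AuxLemmas
variable {n : Type*} [Fintype n] [DecidableEq n]

lemma unit_hc {A : Matrix n n ℂ} (hA : A.IsHermitian) :
    (hA.eigenvectorUnitary : Matrix n n ℂ)ᴴ * (hA.eigenvectorUnitary : Matrix n n ℂ) = 1 := by
  have h := Unitary.coe_star_mul_self hA.eigenvectorUnitary
  rwa [Matrix.star_eq_conjTranspose] at h

lemma unit_ch {A : Matrix n n ℂ} (hA : A.IsHermitian) :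
    (hA.eigenvectorUnitary : Matrix n n ℂ) * (hA.eigenvectorUnitary : Matrix n n ℂ)ᴴ = 1 := by
  have h := Unitary.coe_mul_star_self hA.eigenvectorUnitary
  rwa [Unitary.coe_star, Matrix.star_eq_conjTranspose] at h

lemma mfun_trace (f : ℝ → ℝ) {A : Matrix n n ℂ} (hA : A.IsHermitian) :
    (mfun f A).trace = ∑ i, (f (hA.eigenvalues i) : ℂ) := by
  rw [mfun, dif_pos hA, Matrix.trace_mul_cycle, unit_hc hA, Matrix.one_mul, Matrix.trace_diagonal]

lemma mfun_det (f : ℝ → ℝ) {A : Matrix n n ℂ} (hA : A.IsHermitian) :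
    (mfun f A).det = ∏ i, (f (hA.eigenvalues i) : ℂ) := by
  rw [mfun, dif_pos hA, Matrix.det_mul, Matrix.det_mul, mul_comm, ← mul_assoc,
    ← Matrix.det_mul, unit_hc hA]
  simp

lemma posDef_conj {A B : Matrix n n ℂ} (hA : A.PosDef) (hB : IsUnit B.det) :
    (Bᴴ * A * B).PosDef := by
  refine Matrix.PosDef.of_dotProduct_mulVec_pos ?_ fun x hx => ?_
  · have : (Bᴴ * A * B)ᴴ = Bᴴ * A * B := by
      simp [Matrix.conjTranspose_mul, hA.isHermitian.eq, Matrix.mul_assoc]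
    exact this
  · have hBx : B *ᵥ x ≠ 0 := by
      intro h
      apply hx
      have hinj := Matrix.mulVec_injective_iff_isUnit.mpr ((Matrix.isUnit_iff_isUnit_det B).mpr hB)
      exact hinj (by simpa using h)
    have h2 := hA.dotProduct_mulVec_pos hBx
    calc (0:ℂ) < star (B *ᵥ x) ⬝ᵥ (A *ᵥ (B *ᵥ x)) := h2
      _ = star x ⬝ᵥ ((Bᴴ * A * B) *ᵥ x) := by
          conv_rhs => rw [show Bᴴ * A * B = Bᴴ * (A * B) from Matrix.mul_assoc _ _ _,
            ← Matrix.mulVec_mulVec, Matrix.dotProduct_mulVec, ← Matrix.star_mulVec,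
            ← Matrix.mulVec_mulVec]

lemma mfun_posDef {f : ℝ → ℝ} {A : Matrix n n ℂ} (hA : A.IsHermitian)
    (hf : ∀ i, 0 < f (hA.eigenvalues i)) : (mfun f A).PosDef := by
  rw [mfun, dif_pos hA]
  have hd : (Matrix.diagonal (fun i => (f (hA.eigenvalues i) : ℂ))).PosDef :=
    Matrix.PosDef.diagonal fun i => by exact_mod_cast hf i
  have hU : IsUnit ((hA.eigenvectorUnitary : Matrix n n ℂ)ᴴ).det := by
    have := congrArg Matrix.det (unit_hc hA)
    rw [Matrix.det_mul, Matrix.det_one] at this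
    exact IsUnit.of_mul_eq_one _ this
  have := posDef_conj hd hU
  simpa using this

end AuxLemmas

end Paper

open Paper

theorem stmt9 {m N : ℕ} (A : Fin N → Matrix (Fin m) (Fin m) ℂ)
    (hA : ∀ j, (A j).PosDef) (w : Fin N → ℝ) (hw : ∀ j, 0 ≤ w j)
    (hw1 : ∑ j, w j = 1) (X : Matrix (Fin m) (Fin m) ℂ) (hX : X.PosDef)
    (hKarcher : ∑ j, w j • mlog (mpow X (1 / 2) * (A j)⁻¹ * mpow X (1 / 2)) = 0) :
    X.det = ∏ j, (A j).det ^ (w j : ℂ) := by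
  simp only [mlog, mpow] at hKarcher
  classical
  have hXh : X.IsHermitian := hX.1
  set S := mfun (fun x => x ^ ((1:ℝ)/2)) X with hSdef
  have hSpos : S.PosDef :=
    mfun_posDef hXh (fun i => Real.rpow_pos_of_pos (hX.eigenvalues_pos i) _)
  have hSh : S.IsHermitian := hSpos.1
  set s : ℝ := ∏ i, (hXh.eigenvalues i ^ ((1:ℝ)/2)) with hs
  have hspos : 0 < s :=
    Finset.prod_pos fun i _ => Real.rpow_pos_of_pos (hX.eigenvalues_pos i) _
  have hdetS : S.det = (s : ℂ) := by
    rw [hSdef, mfun_det _ hXh, hs]; push_cast; rfl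
  set xr : ℝ := ∏ i, hXh.eigenvalues i with hxr
  have hxrpos : 0 < xr := Finset.prod_pos fun i _ => hX.eigenvalues_pos i
  have hdetX : X.det = (xr : ℂ) := by
    rw [hXh.det_eq_prod_eigenvalues, hxr]; push_cast; rfl
  have hs2 : s ^ 2 = xr := by
    rw [hs, ← Finset.prod_pow]
    refine Finset.prod_congr rfl fun i _ => ?_
    rw [← Real.rpow_natCast (hXh.eigenvalues i ^ ((1:ℝ)/2)) 2,
      ← Real.rpow_mul (hX.eigenvalues_pos i).le]
    norm_num
  set a : Fin N → ℝ := fun j => ∏ i, (hA j).1.eigenvalues i with ha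
  have hapos : ∀ j, 0 < a j := fun j =>
    Finset.prod_pos fun i _ => (hA j).eigenvalues_pos i
  have hdetA : ∀ j, (A j).det = (a j : ℂ) := fun j => by
    rw [(hA j).1.det_eq_prod_eigenvalues, ha]; push_cast; rfl
  have hMpos : ∀ j, (S * (A j)⁻¹ * S).PosDef := fun j => by
    have hU : IsUnit S.det := by
      rw [hdetS]; exact (Complex.ofReal_ne_zero.mpr hspos.ne').isUnit
    have := posDef_conj (hA j).inv hU
    rwa [hSh.eq] at this
  have hdetM : ∀ j, (S * (A j)⁻¹ * S).det = ((xr / a j : ℝ) : ℂ) := fun j => by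
    rw [Matrix.det_mul, Matrix.det_mul, Matrix.det_nonsing_inv, Ring.inverse_eq_inv',
      hdetS, hdetA j, Complex.ofReal_div, ← hs2]
    push_cast
    ring
  have htr : ∀ j, (mfun Real.log (S * (A j)⁻¹ * S)).trace
      = ((Real.log xr - Real.log (a j) : ℝ) : ℂ) := fun j => by
    have hμ := (hMpos j).eigenvalues_pos
    have h2 : ∏ i, (hMpos j).1.eigenvalues i = xr / a j := by
      have h3 := (hMpos j).1.det_eq_prod_eigenvalues
      rw [hdetM j] at h3
      apply Complex.ofReal_inj.mp
      push_cast at h3 ⊢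
      rw [h3]
      rfl
    rw [mfun_trace Real.log (hMpos j).1, ← Complex.ofReal_sum,
      ← Real.log_prod (fun i _ => (hμ i).ne'), h2,
      Real.log_div hxrpos.ne' (hapos j).ne']
  have key : ∑ j, w j * (Real.log xr - Real.log (a j)) = 0 := by
    have h : (∑ j, ((w j * (Real.log xr - Real.log (a j)) : ℝ) : ℂ)) = 0 := by
      calc ∑ j, ((w j * (Real.log xr - Real.log (a j)) : ℝ) : ℂ)
          = ∑ j, w j • (mfun Real.log (S * (A j)⁻¹ * S)).trace := by
            refine Finset.sum_congr rfl fun j _ => ?_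
            rw [htr j, Complex.real_smul]; push_cast; ring
        _ = (∑ j, w j • mfun Real.log (S * (A j)⁻¹ * S)).trace := by
            rw [Matrix.trace_sum]
            exact Finset.sum_congr rfl fun j _ => (Matrix.trace_smul _ _).symm
        _ = 0 := by rw [hKarcher, Matrix.trace_zero]
    rw [← Complex.ofReal_sum] at h
    exact_mod_cast h
  have hlog : Real.log xr = ∑ j, w j * Real.log (a j) := by
    have h2 : ∑ j, (w j * Real.log xr - w j * Real.log (a j)) = 0 := by
      simpa [mul_sub] using key
    rw [Finset.sum_sub_distrib, ← Finset.sum_mul, hw1, one_mul, sub_eq_zero] at h2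
    exact h2
  have hfin : xr = ∏ j, (a j) ^ (w j) := by
    rw [← Real.exp_log hxrpos, hlog, Real.exp_sum]
    exact Finset.prod_congr rfl fun j _ => by
      rw [Real.rpow_def_of_pos (hapos j), mul_comm]
  rw [hdetX, hfin, Complex.ofReal_prod]
  refine Finset.prod_congr rfl fun j _ => ?_
  rw [hdetA j, Complex.ofReal_cpow (hapos j).le]
end

section
/- Let $A_1, \dots, A_n$ be $m\times m$ positive definite matrices, $\omega=(w_1,\dots,w_n)$ a weight vector with all $w_j > 0$, and suppose each $A_j$ commutes with $M := \exp(\sum_{j=1}^n w_j \log A_j)$. Then for every $t \in \mathbb{R}$, the matrix $X := \exp(t \sum_{j=1}^n w_j \log A_j)$ satisfies the Karcher equation $\sum_{j=1}^n w_j \log(X^{1/2} A_j^{-t} X^{1/2}) = 0$; hence the Karcher mean of $(A_1^t, \dots, A_n^t)$ equals the Log-Euclidean mean $\exp(\sum_j w_j \log A_j^t)$. -/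
open scoped Matrix.Norms.L2Operator
open scoped Matrix
open scoped ComplexOrder

namespace Aux
open Paper Matrix Polynomial

variable {n : Type*} [Fintype n] [DecidableEq n]

lemma contOnSpec (f : ℝ → ℝ) (A : Matrix n n ℂ) : ContinuousOn f (spectrum ℝ A) :=
  (Matrix.finite_real_spectrum (A := A)).continuousOn f

lemma contOnImg (f g : ℝ → ℝ) (A : Matrix n n ℂ) : ContinuousOn f (g '' spectrum ℝ A) :=
  ((Matrix.finite_real_spectrum (A := A)).image g).continuousOn f

lemma mfun_eq_cfc {A : Matrix n n ℂ} (hA : A.IsHermitian) (f : ℝ → ℝ) :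
    mfun f A = cfc f A := by
  rw [Paper.mfun, dif_pos hA, hA.cfc_eq f, Matrix.IsHermitian.cfc]
  rfl

lemma mfun_herm {A : Matrix n n ℂ} (hA : A.IsHermitian) (f : ℝ → ℝ) :
    (mfun f A).IsHermitian := by
  rw [mfun_eq_cfc hA]
  exact cfc_predicate f A

lemma smul_herm {A : Matrix n n ℂ} (hA : A.IsHermitian) (r : ℝ) :
    (r • A).IsHermitian := by
  show (r • A)ᴴ = r • A
  have : (r • A)ᴴ = r • Aᴴ := by
    ext i j
    simp [Matrix.conjTranspose_apply]
  rw [this, hA.eq]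

/-- Conjugation by a unitary as an `ℝ`-algebra homomorphism. -/
noncomputable def conjAlgHom (U : Matrix.unitaryGroup n ℂ) :
    Matrix n n ℂ →ₐ[ℝ] Matrix n n ℂ where
  toFun X := (U : Matrix n n ℂ) * X * star (U : Matrix n n ℂ)
  map_one' := by
    show (U : Matrix n n ℂ) * 1 * star (U : Matrix n n ℂ) = 1
    rw [mul_one]
    exact U.prop.2
  map_mul' X Y := by
    have h : star (U : Matrix n n ℂ) * (U : Matrix n n ℂ) = 1 := U.prop.1
    calc (U : Matrix n n ℂ) * (X * Y) * star (U : Matrix n n ℂ)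
        = ((U : Matrix n n ℂ) * X) * (star (U : Matrix n n ℂ) * (U : Matrix n n ℂ)) *
          (Y * star (U : Matrix n n ℂ)) := by rw [h]; noncomm_ring
      _ = _ := by noncomm_ring
  map_zero' := by simp
  map_add' X Y := by noncomm_ring
  commutes' r := by
    show (U : Matrix n n ℂ) * algebraMap ℝ (Matrix n n ℂ) r * star (U : Matrix n n ℂ) = _
    rw [Algebra.algebraMap_eq_smul_one, mul_smul_comm, mul_one, smul_mul_assoc, U.prop.2]

lemma aeval_conj (U : Matrix.unitaryGroup n ℂ) (D : Matrix n n ℂ) (p : ℝ[X]) :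
    aeval ((U : Matrix n n ℂ) * D * star (U : Matrix n n ℂ)) p
      = (U : Matrix n n ℂ) * aeval D p * star (U : Matrix n n ℂ) :=
  (Polynomial.aeval_algHom_apply (conjAlgHom U) D p)

lemma aeval_diag (d : n → ℂ) (p : ℝ[X]) :
    aeval (Matrix.diagonal d) p = Matrix.diagonal (fun i => aeval (d i) p) := by
  have h1 := Polynomial.aeval_algHom_apply (Matrix.diagonalAlgHom (n := n) (α := ℂ) ℝ) d p
  simp only [Matrix.diagonalAlgHom_apply] at h1
  rw [h1]
  have h2 : (aeval d p : n → ℂ) = fun i => aeval (d i) p := by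
    funext i
    exact (Polynomial.aeval_algHom_apply (Pi.evalAlgHom ℝ (fun _ => ℂ) i) d p).symm
  rw [h2]

lemma mfun_eq_aeval {A : Matrix n n ℂ} (hA : A.IsHermitian) (f : ℝ → ℝ) :
    ∃ p : ℝ[X], mfun f A = aeval A p := by
  classical
  set s : Finset ℝ := Finset.image hA.eigenvalues Finset.univ with hs
  refine ⟨Lagrange.interpolate s id f, ?_⟩
  conv_rhs => rw [hA.spectral_theorem, Unitary.conjStarAlgAut_apply]
  rw [aeval_conj, aeval_diag, Paper.mfun, dif_pos hA]
  have hstar : star (hA.eigenvectorUnitary : Matrix n n ℂ)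
      = (hA.eigenvectorUnitary : Matrix n n ℂ)ᴴ := rfl
  rw [hstar]
  have hd : (fun i => (aeval ((RCLike.ofReal ∘ hA.eigenvalues) i) (Lagrange.interpolate s id f) : ℂ))
      = fun i => ((f (hA.eigenvalues i) : ℝ) : ℂ) := by
    funext i
    have hmem : hA.eigenvalues i ∈ s := by simp [hs]
    have heval : Polynomial.eval (hA.eigenvalues i) (Lagrange.interpolate s id f)
        = f (hA.eigenvalues i) := by
      simpa using Lagrange.eval_interpolate_at_node f (Set.injOn_id _) hmem
    have h2 : ((RCLike.ofReal ∘ hA.eigenvalues) i : ℂ) = algebraMap ℝ ℂ (hA.eigenvalues i) := rfl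
    rw [h2, Polynomial.aeval_algebraMap_apply_eq_algebraMap_eval, heval]
    rfl
  rw [hd]

lemma commute_aeval {A C : Matrix n n ℂ} (h : Commute A C) (p : ℝ[X]) :
    Commute (aeval A p) C := by
  induction p using Polynomial.induction_on' with
  | add p q hp hq => rw [map_add]; exact hp.add_left hq
  | monomial k a =>
      rw [Polynomial.aeval_monomial]
      exact (Algebra.commute_algebraMap_left a C).mul_left (h.pow_left k)

lemma commute_mfun {A C : Matrix n n ℂ} (hA : A.IsHermitian) (h : Commute A C) (f : ℝ → ℝ) :
    Commute (mfun f A) C := by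
  obtain ⟨p, hp⟩ := mfun_eq_aeval hA f
  rw [hp]
  exact commute_aeval h p

lemma mexp_eq_exp {A : Matrix n n ℂ} (hA : A.IsHermitian) :
    mexp A = NormedSpace.exp A := by
  have hU : star (hA.eigenvectorUnitary : Matrix n n ℂ) * (hA.eigenvectorUnitary : Matrix n n ℂ)
      = 1 := hA.eigenvectorUnitary.prop.1
  have hUinv : (hA.eigenvectorUnitary : Matrix n n ℂ)⁻¹
      = star (hA.eigenvectorUnitary : Matrix n n ℂ) := Matrix.inv_eq_left_inv hU
  have hunit : IsUnit (hA.eigenvectorUnitary : Matrix n n ℂ) :=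
    ⟨⟨_, star (hA.eigenvectorUnitary : Matrix n n ℂ),
      hA.eigenvectorUnitary.prop.2, hA.eigenvectorUnitary.prop.1⟩, rfl⟩
  have h1 : NormedSpace.exp A = (hA.eigenvectorUnitary : Matrix n n ℂ) *
      NormedSpace.exp (Matrix.diagonal (RCLike.ofReal ∘ hA.eigenvalues) : Matrix n n ℂ) *
      star (hA.eigenvectorUnitary : Matrix n n ℂ) := by
    conv_lhs => rw [hA.spectral_theorem, Unitary.conjStarAlgAut_apply, ← hUinv]
    rw [← hUinv]
    exact Matrix.exp_conj _ _ hunit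
  have h2 : NormedSpace.exp (Matrix.diagonal (RCLike.ofReal ∘ hA.eigenvalues) : Matrix n n ℂ)
      = Matrix.diagonal (fun i => ((Real.exp (hA.eigenvalues i) : ℝ) : ℂ)) := by
    have h3 : NormedSpace.exp (Matrix.diagonal (RCLike.ofReal ∘ hA.eigenvalues) : Matrix n n ℂ)
        = Matrix.diagonal (NormedSpace.exp (RCLike.ofReal ∘ hA.eigenvalues : n → ℂ)) :=
      Matrix.exp_diagonal _
    have h4 : NormedSpace.exp (RCLike.ofReal ∘ hA.eigenvalues : n → ℂ)
        = fun i => NormedSpace.exp (((hA.eigenvalues i : ℝ)) : ℂ) :=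
      Pi.exp_def (𝔸 := fun _ : n => ℂ) _
    have h5 : (fun i => NormedSpace.exp (((hA.eigenvalues i : ℝ)) : ℂ))
        = fun i => ((Real.exp (hA.eigenvalues i) : ℝ) : ℂ) := by
      funext i
      show NormedSpace.exp (Complex.ofReal (hA.eigenvalues i))
        = Complex.ofReal (Real.exp (hA.eigenvalues i))
      rw [← Complex.exp_eq_exp_ℂ, Complex.ofReal_exp]
    rw [h3, h4, h5]
  rw [h1, h2, Paper.mexp, Paper.mfun, dif_pos hA]
  rfl

lemma mlog_mexp {A : Matrix n n ℂ} (hA : A.IsHermitian) : mlog (mexp A) = A := by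
  rw [Paper.mlog, Paper.mexp, mfun_eq_cfc hA, mfun_eq_cfc (by rw [← mfun_eq_cfc hA]; exact mfun_herm hA _)]
  rw [← cfc_comp Real.log Real.exp A hA.isSelfAdjoint (contOnImg _ _ _) (contOnSpec _ _)]
  have : cfc (Real.log ∘ Real.exp) A = cfc (id : ℝ → ℝ) A :=
    cfc_congr (fun x _ => Real.log_exp x)
  rw [this, cfc_id ℝ A hA.isSelfAdjoint]

lemma mexp_mlog {A : Matrix n n ℂ} (hA : A.PosDef) : mexp (mlog A) = A := by
  rw [Paper.mlog, Paper.mexp, mfun_eq_cfc hA.1, mfun_eq_cfc (by rw [← mfun_eq_cfc hA.1]; exact mfun_herm hA.1 _)]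
  rw [← cfc_comp Real.exp Real.log A hA.1.isSelfAdjoint (contOnImg _ _ _) (contOnSpec _ _)]
  have : cfc (Real.exp ∘ Real.log) A = cfc (id : ℝ → ℝ) A := by
    apply cfc_congr
    intro x hx
    rw [(hA.1 : A.IsHermitian).spectrum_real_eq_range_eigenvalues] at hx
    obtain ⟨i, rfl⟩ := hx
    exact Real.exp_log (hA.eigenvalues_pos i)
  rw [this, cfc_id ℝ A hA.1.isSelfAdjoint]

lemma mpow_mexp {A : Matrix n n ℂ} (hA : A.IsHermitian) (r : ℝ) :
    mpow (mexp A) r = mexp (r • A) := by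
  have hsmul : (r • A).IsHermitian := smul_herm hA r
  rw [Paper.mpow, Paper.mexp, Paper.mexp, mfun_eq_cfc hA,
    mfun_eq_cfc (by rw [← mfun_eq_cfc hA]; exact mfun_herm hA _),
    mfun_eq_cfc hsmul]
  rw [← cfc_comp (fun x => x ^ r) Real.exp A hA.isSelfAdjoint (contOnImg _ _ _) (contOnSpec _ _)]
  have h1 : cfc ((fun x => x ^ r) ∘ Real.exp) A = cfc (fun x => Real.exp (r * x)) A := by
    apply cfc_congr
    intro x _
    show Real.exp x ^ r = Real.exp (r * x)
    rw [Real.rpow_def_of_pos (Real.exp_pos x), Real.log_exp, mul_comm]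
  rw [h1]
  exact cfc_comp_const_mul r Real.exp A (contOnImg _ _ _) hA.isSelfAdjoint

lemma add_herm {A B : Matrix n n ℂ} (hA : A.IsHermitian) (hB : B.IsHermitian) :
    (A + B).IsHermitian := hA.add hB

lemma sum_herm {ι : Type*} (s : Finset ι) (F : ι → Matrix n n ℂ)
    (h : ∀ i ∈ s, (F i).IsHermitian) : (∑ i ∈ s, F i).IsHermitian := by
  show _ᴴ = _
  rw [Matrix.conjTranspose_sum]
  exact Finset.sum_congr rfl h

lemma mexp_mul_mexp_mul_mexp {A B : Matrix n n ℂ} (hA : A.IsHermitian) (hB : B.IsHermitian)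
    (h : Commute A B) : mexp A * mexp B * mexp A = mexp (A + B + A) := by
  have hAB : (A + B).IsHermitian := add_herm hA hB
  have hABA : (A + B + A).IsHermitian := add_herm hAB hA
  rw [mexp_eq_exp hA, mexp_eq_exp hB, mexp_eq_exp hABA]
  have e1 : NormedSpace.exp A * NormedSpace.exp B = NormedSpace.exp (A + B) :=
    (Matrix.exp_add_of_commute A B h).symm
  have e2 : NormedSpace.exp (A + B) * NormedSpace.exp A = NormedSpace.exp (A + B + A) :=
    (Matrix.exp_add_of_commute (A + B) A ((Commute.refl A).add_left h.symm)).symm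
  rw [e1, e2]

end Aux

open Paper

theorem stmt10 {m N : ℕ} (A : Fin N → Matrix (Fin m) (Fin m) ℂ)
    (hA : ∀ j, (A j).PosDef) (w : Fin N → ℝ) (hw : ∀ j, 0 < w j)
    (hw1 : ∑ j, w j = 1)
    (hcomm : ∀ j, A j * mexp (∑ i, w i • mlog (A i)) =
      mexp (∑ i, w i • mlog (A i)) * A j) :
    ∀ t : ℝ,
      (∑ j, w j • mlog (mpow (mexp (t • ∑ i, w i • mlog (A i))) (1 / 2) *
          mpow (A j) (-t) * mpow (mexp (t • ∑ i, w i • mlog (A i))) (1 / 2)) = 0) ∧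
      mexp (t • ∑ i, w i • mlog (A i)) = mexp (∑ i, w i • mlog (mpow (A i) t)) := by
  intro t
  have hAh : ∀ j, (A j).IsHermitian := fun j => (hA j).1
  have hL : ∀ j, (mlog (A j)).IsHermitian := fun j => Aux.mfun_herm (hAh j) _
  have hH : (∑ i, w i • mlog (A i)).IsHermitian :=
    Aux.sum_herm _ _ (fun i _ => Aux.smul_herm (hL i) (w i))
  have htH : ∀ s : ℝ, (s • ∑ i, w i • mlog (A i)).IsHermitian := fun s => Aux.smul_herm hH s
  have hMherm : (mexp (∑ i, w i • mlog (A i))).IsHermitian := Aux.mfun_herm hH _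
  have hcommH : ∀ j, Commute (A j) (∑ i, w i • mlog (A i)) := by
    intro j
    have h1 : Commute (mexp (∑ i, w i • mlog (A i))) (A j) := (hcomm j).symm
    have h2 : Commute (mlog (mexp (∑ i, w i • mlog (A i)))) (A j) :=
      Aux.commute_mfun hMherm h1 Real.log
    rw [Aux.mlog_mexp hH] at h2
    exact h2.symm
  have hcommLH : ∀ j, Commute (mlog (A j)) (∑ i, w i • mlog (A i)) :=
    fun j => Aux.commute_mfun (hAh j) (hcommH j) Real.log
  have hterm : ∀ j, mlog (mpow (mexp (t • ∑ i, w i • mlog (A i))) (1 / 2) * mpow (A j) (-t) *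
      mpow (mexp (t • ∑ i, w i • mlog (A i))) (1 / 2))
      = t • (∑ i, w i • mlog (A i)) + (-t) • mlog (A j) := by
    intro j
    have e1 : mpow (mexp (t • ∑ i, w i • mlog (A i))) (1 / 2)
        = mexp ((1/2 : ℝ) • (t • ∑ i, w i • mlog (A i))) := Aux.mpow_mexp (htH t) (1/2)
    have e2 : mpow (A j) (-t) = mexp ((-t) • mlog (A j)) := by
      conv_lhs => rw [← Aux.mexp_mlog (hA j)]
      exact Aux.mpow_mexp (hL j) (-t)
    have hcomm2 : Commute ((1/2 : ℝ) • (t • ∑ i, w i • mlog (A i))) ((-t) • mlog (A j)) :=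
      (((hcommLH j).symm.smul_left t).smul_left (1/2 : ℝ)).smul_right (-t)
    have h3 := Aux.mexp_mul_mexp_mul_mexp
      (Aux.smul_herm (htH t) (1/2 : ℝ)) (Aux.smul_herm (hL j) (-t)) hcomm2
    have habc : ((1/2 : ℝ) • (t • ∑ i, w i • mlog (A i))) + ((-t) • mlog (A j)) +
        ((1/2 : ℝ) • (t • ∑ i, w i • mlog (A i)))
        = t • (∑ i, w i • mlog (A i)) + (-t) • mlog (A j) := by module
    rw [e1, e2, h3, habc,
      Aux.mlog_mexp (Aux.add_herm (htH t) (Aux.smul_herm (hL j) (-t)))]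
  constructor
  · calc ∑ j, w j • mlog (mpow (mexp (t • ∑ i, w i • mlog (A i))) (1 / 2) *
          mpow (A j) (-t) * mpow (mexp (t • ∑ i, w i • mlog (A i))) (1 / 2))
        = ∑ j, ((w j * t) • (∑ i, w i • mlog (A i)) + (-t) • (w j • mlog (A j))) :=
          Finset.sum_congr rfl (fun j _ => by rw [hterm j]; module)
      _ = (∑ j, (w j * t)) • (∑ i, w i • mlog (A i)) + (-t) • (∑ j, w j • mlog (A j)) := by
          rw [Finset.sum_add_distrib, ← Finset.sum_smul, ← Finset.smul_sum]
      _ = t • (∑ i, w i • mlog (A i)) + (-t) • (∑ i, w i • mlog (A i)) := by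
          rw [← Finset.sum_mul, hw1, one_mul]
      _ = 0 := by module
  · have h2 : ∀ i, mlog (mpow (A i) t) = t • mlog (A i) := by
      intro i
      have e : mpow (A i) t = mexp (t • mlog (A i)) := by
        conv_lhs => rw [← Aux.mexp_mlog (hA i)]
        exact Aux.mpow_mexp (hL i) t
      rw [e, Aux.mlog_mexp (Aux.smul_herm (hL i) t)]
    have h3 : (∑ i, w i • mlog (mpow (A i) t)) = t • ∑ i, w i • mlog (A i) :=
      calc ∑ i, w i • mlog (mpow (A i) t) = ∑ i, w i • (t • mlog (A i)) :=
            Finset.sum_congr rfl (fun i _ => by rw [h2 i])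
        _ = t • ∑ i, w i • mlog (A i) := by
            rw [Finset.smul_sum]
            exact Finset.sum_congr rfl (fun i _ => smul_comm _ _ _)
    rw [h3]
end

section
/- Let $\|\cdot\|$ be a strictly increasing unitarily invariant norm on $m\times m$ matrices, and let $A, B$ be positive definite. If $A \prec_{\log} B$ (log-majorization) and $\|A\| = \|B\|$, then $A$ and $B$ have the same eigenvalues with multiplicities; consequently $\mathrm{Tr}\,f(A) = \mathrm{Tr}\,f(B)$ for every real function $f$ on $(0,\infty)$. -/
open scoped Matrix.Norms.L2Operator
open scoped Matrix
open scoped ComplexOrder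

open Paper

namespace Helper

variable {m : ℕ}

/-- diagonal matrix with real entries, as a complex matrix -/
noncomputable def dC (x : Fin m → ℝ) : Matrix (Fin m) (Fin m) ℂ :=
  Matrix.diagonal (fun i => (x i : ℂ))


lemma perm_mem_unitary (σ : Equiv.Perm (Fin m)) :
    (σ.permMatrix ℂ) ∈ Matrix.unitaryGroup (Fin m) ℂ := by
  rw [Matrix.mem_unitaryGroup_iff]
  have hstar : star (σ.permMatrix ℂ) = (σ⁻¹).permMatrix ℂ := by
    ext i j
    simp only [Matrix.star_apply, Equiv.Perm.permMatrix, PEquiv.toMatrix_apply,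
      Equiv.toPEquiv_apply, Option.mem_def, Option.some.injEq]
    by_cases h : σ j = i
    · rw [if_pos h, if_pos (by simp [← h]), star_one]
    · rw [if_neg h, if_neg (by intro hc; exact h (by simp [← hc])), star_zero]
  rw [hstar]
  ext i j
  rw [show (σ.permMatrix ℂ) * ((σ⁻¹).permMatrix ℂ)
      = ((σ⁻¹).permMatrix ℂ).submatrix σ id from
    PEquiv.toMatrix_toPEquiv_mul σ _]
  simp [PEquiv.toMatrix_apply, Equiv.toPEquiv_apply, Matrix.one_apply, eq_comm]


lemma dC_perm (d : Fin m → ℝ) (σ : Equiv.Perm (Fin m)) :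
    dC (d ∘ σ) = (σ.permMatrix ℂ) * dC d * ((σ⁻¹).permMatrix ℂ) := by
  rw [Matrix.mul_assoc]
  rw [show dC d * ((σ⁻¹).permMatrix ℂ) = (dC d).submatrix id σ from by
    have := PEquiv.mul_toMatrix_toPEquiv (dC d) (σ⁻¹ : Equiv.Perm (Fin m))
    simpa [Equiv.Perm.permMatrix, Equiv.Perm.inv_def] using this]
  rw [PEquiv.toMatrix_toPEquiv_mul]
  rw [Matrix.submatrix_submatrix]
  unfold dC
  simp only [Function.id_comp, Function.comp_id]
  rw [Matrix.submatrix_diagonal _ _ (by exact fun x y h => σ.injective (by simpa using h))]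
  rfl


lemma abel_aux (n : ℕ) (e D : ℕ → ℝ) (he : ∀ k, e k ≤ e (k + 1))
    (hD : ∀ k, 0 ≤ D k) (hD0 : D 0 = 0) (hDn : D n = 0) :
    ∑ k ∈ Finset.range n, e k * (D (k + 1) - D k) ≤ 0 := by
  have key : ∑ k ∈ Finset.range n, e k * (D (k + 1) - D k)
      = (∑ k ∈ Finset.range n, (e k - e (k+1)) * D (k+1))
        + (e n * D n - e 0 * D 0) := by
    rw [← Finset.sum_range_sub (fun k => e k * D k) n]
    rw [← Finset.sum_add_distrib]
    congr 1
    funext k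
    ring
  rw [key, hD0, hDn]
  have : ∑ k ∈ Finset.range n, (e k - e (k+1)) * D (k+1) ≤ 0 := by
    apply Finset.sum_nonpos
    intro k _
    have h1 : e k - e (k+1) ≤ 0 := by linarith [he k]
    exact mul_nonpos_of_nonpos_of_nonneg h1 (hD (k+1))
  linarith


section NFacts

variable (N : Matrix (Fin m) (Fin m) ℂ → ℝ)
  (hN_add : ∀ X Y, N (X + Y) ≤ N X + N Y)
  (hN_smul : ∀ (c : ℂ) X, N (c • X) = ‖c‖ * N X)
  (hN_ui : ∀ U V X, U ∈ Matrix.unitaryGroup (Fin m) ℂ → V ∈ Matrix.unitaryGroup (Fin m) ℂ →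
      N (U * X * V) = N X)

include hN_smul in
lemma N_zero : N 0 = 0 := by
  have := hN_smul 0 0
  simpa using this


include hN_add hN_smul in
lemma N_sum {ι : Type*} (t : Finset ι) (f : ι → Matrix (Fin m) (Fin m) ℂ) :
    N (∑ i ∈ t, f i) ≤ ∑ i ∈ t, N (f i) := by
  classical
  induction t using Finset.induction_on with
  | empty => simp [N_zero N hN_smul]
  | insert _ _ hx ih =>
      rename_i a s
      rw [Finset.sum_insert hx, Finset.sum_insert hx]
      exact (hN_add _ _).trans (by linarith)


include hN_smul in
lemma N_smul_real (r : ℝ) (hr : 0 ≤ r) (X : Matrix (Fin m) (Fin m) ℂ) :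
    N ((r : ℂ) • X) = r * N X := by
  rw [hN_smul]
  simp [abs_of_nonneg hr]


include hN_ui in
lemma N_dC_perm (d : Fin m → ℝ) (σ : Equiv.Perm (Fin m)) :
    N (dC (d ∘ σ)) = N (dC d) := by
  rw [dC_perm]
  exact hN_ui _ _ _ (perm_mem_unitary σ) (perm_mem_unitary σ⁻¹)


include hN_add hN_smul hN_ui in
lemma N_mono (x y : Fin m → ℝ) (hx : ∀ i, 0 ≤ x i) (hxy : ∀ i, x i ≤ y i) :
    N (dC x) ≤ N (dC y) := by
  classical
  set t : Fin m → ℝ := fun i => if y i = 0 then 0 else x i / y i with ht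
  have hy : ∀ i, 0 ≤ y i := fun i => (hx i).trans (hxy i)
  have ht_mem : ∀ i, t i ∈ Set.Icc (-1 : ℝ) 1 := by
    intro i
    by_cases h : y i = 0
    · simp [ht, h]
    · have hypos : 0 < y i := lt_of_le_of_ne (hy i) (Ne.symm h)
      constructor
      · simp only [ht, if_neg h]
        have : (0:ℝ) ≤ x i / y i := div_nonneg (hx i) (hy i)
        linarith
      · simp only [ht, if_neg h]
        exact (div_le_one hypos).mpr (hxy i)
  have htx : ∀ i, t i * y i = x i := by
    intro i
    by_cases h : y i = 0
    · have : x i = 0 := le_antisymm (h ▸ hxy i) (hx i)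
      simp [ht, h, this]
    · simp [ht, h, div_mul_cancel₀ _ h]
  set θ : Fin m → ℝ := fun i => Real.arccos (t i) with hθ
  set u : Fin m → ℂ := fun i => Complex.exp ((θ i : ℂ) * Complex.I) with hu
  have hustar : ∀ i, star (u i) = Complex.exp (-((θ i : ℂ) * Complex.I)) := by
    intro i
    have h0 : star (u i) = (starRingEnd ℂ) (Complex.exp ((θ i : ℂ) * Complex.I)) := rfl
    rw [h0, ← Complex.exp_conj, map_mul, Complex.conj_I, Complex.conj_ofReal]
    ring_nf
  have hsum : ∀ i, u i + star (u i) = 2 * (t i : ℂ) := by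
    intro i
    rw [hustar i]
    show Complex.exp ((θ i : ℂ) * Complex.I) + Complex.exp (-((θ i : ℂ) * Complex.I))
        = 2 * (t i : ℂ)
    have hcos : Complex.cos ((θ i : ℂ)) =
        (Complex.exp ((θ i:ℂ) * Complex.I) + Complex.exp (-((θ i:ℂ) * Complex.I))) / 2 := by
      rw [Complex.cos]
      ring_nf
    have harc : Real.cos (θ i) = t i := Real.cos_arccos (ht_mem i).1 (ht_mem i).2
    have h2 : Complex.cos ((θ i : ℂ)) = ((t i : ℝ) : ℂ) := by
      rw [← Complex.ofReal_cos, harc]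
    linear_combination -2 * hcos + 2 * h2
  set Du : Matrix (Fin m) (Fin m) ℂ := Matrix.diagonal u with hDu
  have hDu_mem : Du ∈ Matrix.unitaryGroup (Fin m) ℂ := by
    rw [Matrix.mem_unitaryGroup_iff]
    rw [hDu, Matrix.star_eq_conjTranspose, Matrix.diagonal_conjTranspose,
      Matrix.diagonal_mul_diagonal]
    convert Matrix.diagonal_one
    rename_i i
    show u i * star (u i) = 1
    rw [hustar i, hu, ← Complex.exp_add]
    simp
  have hDustar_mem : star Du ∈ Matrix.unitaryGroup (Fin m) ℂ := Unitary.star_mem hDu_mem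
  have hdecomp : dC x = ((1:ℝ)/2 : ℂ) • (Du * dC y + star Du * dC y) := by
    rw [hDu, Matrix.star_eq_conjTranspose, Matrix.diagonal_conjTranspose]
    unfold dC
    rw [Matrix.diagonal_mul_diagonal, Matrix.diagonal_mul_diagonal, Matrix.diagonal_add,
      ← Matrix.diagonal_smul]
    have hfun : (fun i => ((x i : ℂ)))
        = ((1:ℝ)/2 : ℂ) • fun i => u i * (y i:ℂ) + star (u i) * (y i:ℂ) := by
      funext i
      show (x i : ℂ) = ((1:ℝ)/2 : ℂ) * (u i * (y i : ℂ) + star (u i) * (y i : ℂ))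
      have hc : ((t i : ℂ)) * (y i : ℂ) = (x i : ℂ) := by
        rw [← Complex.ofReal_mul, htx i]
      push_cast
      linear_combination -hc - ((y i : ℂ)/2) * hsum i
    rw [hfun]
    rfl
  calc N (dC x) = ((1:ℝ)/2) * N (Du * dC y + star Du * dC y) := by
        rw [hdecomp, hN_smul]
        norm_num
    _ ≤ ((1:ℝ)/2) * (N (Du * dC y) + N (star Du * dC y)) := by
        have := hN_add (Du * dC y) (star Du * dC y)
        linarith
    _ = N (dC y) := by
        have h1 : N (Du * dC y) = N (dC y) := by
          have := hN_ui Du 1 (dC y) hDu_mem (Submonoid.one_mem _)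
          simpa using this
        have h2 : N (star Du * dC y) = N (dC y) := by
          have := hN_ui (star Du) 1 (dC y) hDustar_mem (Submonoid.one_mem _)
          simpa using this
        rw [h1, h2]; ring


end NFacts

lemma key (N : Matrix (Fin m) (Fin m) ℂ → ℝ)
    (hN_add : ∀ X Y, N (X + Y) ≤ N X + N Y)
    (hN_smul : ∀ (c : ℂ) X, N (c • X) = ‖c‖ * N X)
    (hN_ui : ∀ U V X, U ∈ Matrix.unitaryGroup (Fin m) ℂ → V ∈ Matrix.unitaryGroup (Fin m) ℂ →
      N (U * X * V) = N X)
    (hN_strict : ∀ A B : Matrix (Fin m) (Fin m) ℂ, A.PosSemidef → B.PosSemidef →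
      (B - A).PosSemidef → N A = N B → A = B)
    (u v : Fin m → ℝ) (hu : Antitone u) (hv : Antitone v)
    (hpart : ∀ k : ℕ, ∑ i ∈ Finset.univ.filter (fun i : Fin m => (i : ℕ) < k), u i
        ≤ ∑ i ∈ Finset.univ.filter (fun i : Fin m => (i : ℕ) < k), v i)
    (htot : ∑ i, u i = ∑ i, v i)
    (hNuv : N (dC (fun i => Real.exp (u i))) = N (dC (fun i => Real.exp (v i)))) :
    u = v := by
  classical
  set S : Finset (Fin m → ℝ) := Finset.image (fun σ : Equiv.Perm (Fin m) => v ∘ σ)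
    Finset.univ with hS
  -- Step 1 : u is in the convex hull of the permutations of v
  have hmem : u ∈ convexHull ℝ (S : Set (Fin m → ℝ)) := by
    by_contra hcon
    obtain ⟨f, s0, hfu, hfS⟩ := geometric_hahn_banach_point_closed
      (convex_convexHull ℝ _) (S.finite_toSet.isClosed_convexHull (𝕜 := ℝ)) hcon
    set c : Fin m → ℝ := fun i => f (Pi.single i 1) with hc
    have hflin : ∀ w : Fin m → ℝ, f w = ∑ i, c i * w i := by
      intro w
      have hw : w = ∑ i : Fin m, w i • (Pi.single i (1:ℝ) : Fin m → ℝ) := by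
        funext j
        rw [Finset.sum_apply]
        simp [Pi.single_apply]
      calc f w = f (∑ i : Fin m, w i • (Pi.single i (1:ℝ) : Fin m → ℝ)) := by rw [← hw]
        _ = ∑ i : Fin m, w i • f (Pi.single i (1:ℝ) : Fin m → ℝ) := by rw [map_sum]; simp
        _ = ∑ i, c i * w i := by
            apply Finset.sum_congr rfl
            intro i _
            rw [smul_eq_mul, mul_comm, hc]
    set τ := Tuple.sort c with hτ
    have hcmono : Monotone (c ∘ τ) := Tuple.monotone_sort c
    have hanti : Antivary (c ∘ τ) u := by
      intro i j hij
      have hji : j < i := by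
        by_contra h
        push_neg at h
        exact absurd (hu h) (not_le.mpr hij)
      exact hcmono hji.le
    have hre : ∑ i, (c ∘ τ) i * u i ≤ ∑ i, c i * u i := by
      have h := hanti.sum_mul_le_sum_comp_perm_mul (σ := τ⁻¹)
      calc ∑ i, (c ∘ τ) i * u i ≤ ∑ i, (c ∘ τ) (τ⁻¹ i) * u i := h
        _ = ∑ i, c i * u i := by
            apply Finset.sum_congr rfl
            intro i _
            simp
    -- Abel summation step
    set e : ℕ → ℝ := fun k =>
      if h : k < m then (c ∘ τ) ⟨k, h⟩
      else if h' : 0 < m then (c ∘ τ) ⟨m - 1, by omega⟩ else 0 with he_def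
    have he : ∀ k, e k ≤ e (k + 1) := by
      intro k
      by_cases h1 : k + 1 < m
      · have h0 : k < m := by omega
        rw [he_def]
        simp only [dif_pos h0, dif_pos h1]
        exact hcmono (by simp [Fin.le_def])
      · by_cases h0 : k < m
        · have hk : k = m - 1 := by omega
          have hm : 0 < m := by omega
          rw [he_def]
          simp only [dif_pos h0, dif_neg h1, dif_pos hm]
          apply le_of_eq
          congr 1
          exact Fin.ext (by simp [hk])
        · rw [he_def]
          simp only [dif_neg h0, dif_neg h1]
          exact le_refl _
    set D : ℕ → ℝ := fun k =>
      (∑ i ∈ Finset.univ.filter (fun i : Fin m => (i : ℕ) < k), v i)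
        - (∑ i ∈ Finset.univ.filter (fun i : Fin m => (i : ℕ) < k), u i) with hD_def
    have hD : ∀ k, 0 ≤ D k := fun k => sub_nonneg.mpr (hpart k)
    have hD0 : D 0 = 0 := by simp [hD_def]
    have hfilter_univ : (Finset.univ.filter (fun i : Fin m => (i : ℕ) < m)) = Finset.univ := by
      apply Finset.filter_true_of_mem
      intro i _
      exact i.isLt
    have hDm : D m = 0 := by
      rw [hD_def]
      simp only [hfilter_univ]
      rw [htot]
      ring
    have hstep : ∀ (w : Fin m → ℝ) (k : ℕ) (hk : k < m),
        (∑ i ∈ Finset.univ.filter (fun i : Fin m => (i : ℕ) < k + 1), w i)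
          = (∑ i ∈ Finset.univ.filter (fun i : Fin m => (i : ℕ) < k), w i) + w ⟨k, hk⟩ := by
      intro w k hk
      have hins : (Finset.univ.filter (fun i : Fin m => (i : ℕ) < k + 1))
          = insert (⟨k, hk⟩ : Fin m) (Finset.univ.filter (fun i : Fin m => (i : ℕ) < k)) := by
        ext i
        simp only [Finset.mem_filter, Finset.mem_univ, true_and, Finset.mem_insert]
        constructor
        · intro h
          rcases Nat.lt_succ_iff_lt_or_eq.mp h with h' | h'
          · exact Or.inr h'
          · exact Or.inl (Fin.ext h')
        · rintro (h | h)
          · rw [h]; exact Nat.lt_succ_self k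
          · omega
      rw [hins, Finset.sum_insert (by simp)]
      ring
    have hterm : ∀ i : Fin m, D ((i : ℕ) + 1) - D (i : ℕ) = v i - u i := by
      intro i
      rw [hD_def]
      simp only
      rw [hstep v (i : ℕ) i.isLt, hstep u (i : ℕ) i.isLt]
      simp only [Fin.eta]
      ring
    have habel : ∑ i : Fin m, (c ∘ τ) i * (v i - u i) ≤ 0 := by
      have h1 : ∑ i : Fin m, (c ∘ τ) i * (v i - u i)
          = ∑ k ∈ Finset.range m, e k * (D (k + 1) - D k) := by
        rw [← Fin.sum_univ_eq_sum_range (fun k => e k * (D (k + 1) - D k)) m]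
        apply Finset.sum_congr rfl
        intro i _
        rw [hterm i]
        congr 1
        rw [he_def]
        simp only [dif_pos i.isLt, Fin.eta]
      rw [h1]
      exact abel_aux m e D he hD hD0 hDm
    have hsum_le : ∑ i, (c ∘ τ) i * v i ≤ ∑ i, (c ∘ τ) i * u i := by
      have : ∑ i : Fin m, (c ∘ τ) i * (v i - u i)
          = (∑ i, (c ∘ τ) i * v i) - ∑ i, (c ∘ τ) i * u i := by
        rw [← Finset.sum_sub_distrib]
        apply Finset.sum_congr rfl
        intro i _
        ring
      linarith [habel, this.symm.trans_le habel]
    have hreindex : ∑ i, (c ∘ τ) i * v i = ∑ i, c i * (v ∘ (τ⁻¹ : Equiv.Perm (Fin m))) i := by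
      rw [← Equiv.sum_comp τ (fun i => c i * (v ∘ (τ⁻¹ : Equiv.Perm (Fin m))) i)]
      apply Finset.sum_congr rfl
      intro i _
      simp
    have hvS : (v ∘ (τ⁻¹ : Equiv.Perm (Fin m))) ∈ S := by
      rw [hS]
      exact Finset.mem_image.mpr ⟨τ⁻¹, Finset.mem_univ _, rfl⟩
    have hcontr : f (v ∘ (τ⁻¹ : Equiv.Perm (Fin m))) ≤ f u := by
      rw [hflin, hflin]
      calc ∑ i, c i * (v ∘ (τ⁻¹ : Equiv.Perm (Fin m))) i
          = ∑ i, (c ∘ τ) i * v i := hreindex.symm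
        _ ≤ ∑ i, (c ∘ τ) i * u i := hsum_le
        _ ≤ ∑ i, c i * u i := hre
    have : s0 < f (v ∘ (τ⁻¹ : Equiv.Perm (Fin m))) :=
      hfS _ (subset_convexHull ℝ _ hvS)
    linarith
  -- Step 2 : weights, Jensen, norm chain, strictness
  obtain ⟨w, hw0, hw1, hwu⟩ := Finset.mem_convexHull'.mp hmem
  have hu_eq : ∀ i, u i = ∑ g ∈ S, w g * g i := by
    intro i
    rw [← hwu]
    rw [Finset.sum_apply]
    rfl
  set a : Fin m → ℝ := fun i => Real.exp (u i) with ha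
  set b : Fin m → ℝ := fun i => Real.exp (v i) with hb
  set cc : Fin m → ℝ := fun i => ∑ g ∈ S, w g * Real.exp (g i) with hcc
  have hjensen : ∀ i, a i ≤ cc i := by
    intro i
    have h := convexOn_exp.map_sum_le (t := S) (w := w) (p := fun g => g i) hw0 hw1
      (by intro g _; trivial)
    simp only [smul_eq_mul] at h
    rw [ha, hcc]
    simp only
    rw [hu_eq i]
    exact h
  have hccg : ∀ g ∈ S, N (dC (fun i => Real.exp (g i))) = N (dC b) := by
    intro g hg
    obtain ⟨σ, _, rfl⟩ := Finset.mem_image.mp hg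
    have : (fun i => Real.exp ((v ∘ σ) i)) = b ∘ σ := rfl
    rw [this]
    exact N_dC_perm N hN_ui b σ
  have hdecomp : dC cc = ∑ g ∈ S, (w g : ℂ) • dC (fun i => Real.exp (g i)) := by
    ext i j
    by_cases hij : i = j
    · subst hij
      simp only [dC, Matrix.diagonal_apply_eq, Matrix.sum_apply, Matrix.smul_apply,
        Matrix.diagonal_apply_eq, smul_eq_mul, hcc]
      push_cast
      rfl
    · simp [dC, Matrix.sum_apply, Matrix.diagonal_apply_ne _ hij, hij]
  have h1 : N (dC a) ≤ N (dC cc) :=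
    N_mono N hN_add hN_smul hN_ui a cc (fun i => (Real.exp_pos _).le) hjensen
  have h2 : N (dC cc) ≤ N (dC b) := by
    rw [hdecomp]
    refine (N_sum N hN_add hN_smul S _).trans ?_
    have : ∀ g ∈ S, N ((w g : ℂ) • dC (fun i => Real.exp (g i))) = w g * N (dC b) := by
      intro g hg
      rw [N_smul_real N hN_smul (w g) (hw0 g hg), hccg g hg]
    rw [Finset.sum_congr rfl this, ← Finset.sum_mul, hw1, one_mul]
  have hNab : N (dC a) = N (dC b) := hNuv
  have hNac : N (dC a) = N (dC cc) := le_antisymm h1 (h2.trans hNab.ge)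
  have hPSD1 : (dC a).PosSemidef := by
    rw [dC]
    rw [Matrix.posSemidef_diagonal_iff]
    intro i
    exact_mod_cast (Real.exp_pos _).le
  have hPSD2 : (dC cc).PosSemidef := by
    rw [dC, Matrix.posSemidef_diagonal_iff]
    intro i
    have : (0:ℝ) ≤ cc i := le_trans (Real.exp_pos _).le (hjensen i)
    exact_mod_cast this
  have hPSD3 : (dC cc - dC a).PosSemidef := by
    rw [dC, dC, Matrix.diagonal_sub, Matrix.posSemidef_diagonal_iff]
    intro i
    rw [show ((cc i : ℂ) - (a i : ℂ)) = ((cc i - a i : ℝ) : ℂ) by push_cast; ring]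
    have : (0:ℝ) ≤ cc i - a i := sub_nonneg.mpr (hjensen i)
    exact_mod_cast this
  have heq : dC a = dC cc := hN_strict _ _ hPSD1 hPSD2 hPSD3 hNac
  have hac : ∀ i, a i = cc i := by
    intro i
    have := congrArg (fun M => M i i) heq
    simp only [dC, Matrix.diagonal_apply_eq] at this
    exact_mod_cast this
  -- Jensen equality case
  have hJeq : ∀ i : Fin m, Real.exp (∑ g ∈ S, w g • (g i)) = ∑ g ∈ S, w g • Real.exp (g i) := by
    intro i
    simp only [smul_eq_mul]
    rw [← hu_eq i]
    exact hac i
  have hex : ∃ g ∈ S, w g ≠ 0 := by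
    by_contra hno
    push_neg at hno
    have : ∑ g ∈ S, w g = 0 := Finset.sum_eq_zero hno
    rw [hw1] at this
    norm_num at this
  obtain ⟨g₀, hg₀S, hg₀w⟩ := hex
  have hg₀u : g₀ = u := by
    funext i
    have hiff := (strictConvexOn_exp.map_sum_eq_iff' (t := S) (w := w) (p := fun g => g i)
      hw0 hw1 (by intro g _; trivial)).mp (hJeq i)
    have := hiff g₀ hg₀S hg₀w
    rw [this]
    simp only [smul_eq_mul]
    exact (hu_eq i).symm
  obtain ⟨σ₀, _, hσ₀⟩ := Finset.mem_image.mp hg₀S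
  have huv : u = v ∘ σ₀ := by rw [← hg₀u, ← hσ₀]
  -- Step 3 : sorted uniqueness
  have hmono1 : Monotone ((fun i => -(v i)) ∘ σ₀) := by
    intro i j hij
    have : u j ≤ u i := hu hij
    rw [huv] at this
    simpa using this
  have hmono2 : Monotone ((fun i => -(v i)) ∘ (Equiv.refl (Fin m))) := by
    intro i j hij
    simpa using hv hij
  have := Tuple.unique_monotone (f := fun i => -(v i)) (σ := σ₀) (τ := Equiv.refl (Fin m))
    hmono1 hmono2
  funext i
  have h := congrFun this i
  simp only [Function.comp_apply, Equiv.refl_apply, neg_inj] at h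
  rw [huv]
  exact h


lemma eigDec_eq {m : ℕ} (A : Matrix (Fin m) (Fin m) ℂ) (hA : A.IsHermitian) :
    eigDec A = fun i => hA.eigenvalues (Tuple.sort hA.eigenvalues i.rev) := by
  rw [eigDec, dif_pos hA]

lemma eigDec_antitone {m : ℕ} (A : Matrix (Fin m) (Fin m) ℂ) (hA : A.IsHermitian) :
    Antitone (eigDec A) := by
  rw [eigDec_eq A hA]
  intro i j hij
  exact Tuple.monotone_sort hA.eigenvalues (Fin.rev_le_rev.mpr hij)

lemma eigDec_perm {m : ℕ} (A : Matrix (Fin m) (Fin m) ℂ) (hA : A.IsHermitian) :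
    ∃ π : Equiv.Perm (Fin m), eigDec A = hA.eigenvalues ∘ π := by
  refine ⟨(Fin.revPerm : Equiv.Perm (Fin m)).trans (Tuple.sort hA.eigenvalues), ?_⟩
  rw [eigDec_eq A hA]
  rfl

lemma eigDec_pos {m : ℕ} (A : Matrix (Fin m) (Fin m) ℂ) (hA : A.PosDef) (i : Fin m) :
    0 < eigDec A i := by
  rw [eigDec_eq A hA.1]
  exact hA.eigenvalues_pos _

lemma eigDec_prod {m : ℕ} (A : Matrix (Fin m) (Fin m) ℂ) (hA : A.IsHermitian) :
    ((∏ i, eigDec A i : ℝ) : ℂ) = A.det := by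
  obtain ⟨π, hπ⟩ := eigDec_perm A hA
  rw [hπ]
  rw [hA.det_eq_prod_eigenvalues]
  push_cast
  exact Equiv.prod_comp π (fun i => ((hA.eigenvalues i : ℝ) : ℂ))

lemma N_eq_dC {m : ℕ} (N : Matrix (Fin m) (Fin m) ℂ → ℝ)
    (hN_ui : ∀ U V X, U ∈ Matrix.unitaryGroup (Fin m) ℂ → V ∈ Matrix.unitaryGroup (Fin m) ℂ →
      N (U * X * V) = N X)
    (A : Matrix (Fin m) (Fin m) ℂ) (hA : A.IsHermitian) :
    N A = N (dC (eigDec A)) := by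
  obtain ⟨π, hπ⟩ := eigDec_perm A hA
  have h1 : N A = N (dC hA.eigenvalues) := by
    conv_lhs => rw [hA.spectral_theorem]
    have hU : (hA.eigenvectorUnitary : Matrix (Fin m) (Fin m) ℂ)
        ∈ Matrix.unitaryGroup (Fin m) ℂ := SetLike.coe_mem _
    have hU' : star (hA.eigenvectorUnitary : Matrix (Fin m) (Fin m) ℂ)
        ∈ Matrix.unitaryGroup (Fin m) ℂ := Unitary.star_mem hU
    rw [Unitary.conjStarAlgAut_apply, hN_ui _ _ _ hU hU']
    rfl
  rw [h1, hπ]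
  exact (N_dC_perm N hN_ui hA.eigenvalues π).symm

end Helper

open Helper in
theorem stmt13 {m : ℕ} (N : Matrix (Fin m) (Fin m) ℂ → ℝ)
    (hN_add : ∀ X Y, N (X + Y) ≤ N X + N Y)
    (hN_smul : ∀ (c : ℂ) X, N (c • X) = ‖c‖ * N X)
    (hN_pos : ∀ X, X ≠ 0 → 0 < N X)
    (hN_ui : ∀ U V X, U ∈ Matrix.unitaryGroup (Fin m) ℂ → V ∈ Matrix.unitaryGroup (Fin m) ℂ →
      N (U * X * V) = N X)
    (hN_strict : ∀ A B : Matrix (Fin m) (Fin m) ℂ, A.PosSemidef → B.PosSemidef →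
      (B - A).PosSemidef → N A = N B → A = B)
    (A B : Matrix (Fin m) (Fin m) ℂ) (hA : A.PosDef) (hB : B.PosDef)
    (hlog : ∀ k : ℕ, k ≤ m →
      ∏ i ∈ Finset.univ.filter (fun i : Fin m => (i : ℕ) < k), eigDec A i ≤
        ∏ i ∈ Finset.univ.filter (fun i : Fin m => (i : ℕ) < k), eigDec B i)
    (hdet : A.det = B.det) (hNAB : N A = N B) :
    eigDec A = eigDec B ∧
      ∀ f : ℝ → ℝ, ∑ i : Fin m, f (eigDec A i) = ∑ i : Fin m, f (eigDec B i) := by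
  classical
  set a : Fin m → ℝ := eigDec A with ha
  set b : Fin m → ℝ := eigDec B with hb
  have ha_pos : ∀ i, 0 < a i := eigDec_pos A hA
  have hb_pos : ∀ i, 0 < b i := eigDec_pos B hB
  set u : Fin m → ℝ := fun i => Real.log (a i) with hu_def
  set v : Fin m → ℝ := fun i => Real.log (b i) with hv_def
  have hau : a = fun i => Real.exp (u i) := by
    funext i
    rw [hu_def]
    exact (Real.exp_log (ha_pos i)).symm
  have hbv : b = fun i => Real.exp (v i) := by
    funext i
    rw [hv_def]
    exact (Real.exp_log (hb_pos i)).symm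
  have hu_anti : Antitone u := by
    intro i j hij
    exact Real.log_le_log (ha_pos j) ((eigDec_antitone A hA.1) hij)
  have hv_anti : Antitone v := by
    intro i j hij
    exact Real.log_le_log (hb_pos j) ((eigDec_antitone B hB.1) hij)
  -- log of partial products
  have hlogsum : ∀ (x : Fin m → ℝ) (hx : ∀ i, 0 < x i) (k : ℕ),
      ∑ i ∈ Finset.univ.filter (fun i : Fin m => (i : ℕ) < k), Real.log (x i)
        = Real.log (∏ i ∈ Finset.univ.filter (fun i : Fin m => (i : ℕ) < k), x i) := by
    intro x hx k
    rw [Real.log_prod]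
    intro i _
    exact (hx i).ne'
  have hprod_eq : ∏ i, a i = ∏ i, b i := by
    have h1 := eigDec_prod A hA.1
    have h2 := eigDec_prod B hB.1
    rw [hdet] at h1
    have := h1.trans h2.symm
    exact_mod_cast this
  have hfilter_univ : ∀ k : ℕ, m ≤ k →
      (Finset.univ.filter (fun i : Fin m => (i : ℕ) < k)) = Finset.univ := by
    intro k hk
    apply Finset.filter_true_of_mem
    intro i _
    exact lt_of_lt_of_le i.isLt hk
  have hpart : ∀ k : ℕ, ∑ i ∈ Finset.univ.filter (fun i : Fin m => (i : ℕ) < k), u i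
      ≤ ∑ i ∈ Finset.univ.filter (fun i : Fin m => (i : ℕ) < k), v i := by
    intro k
    rw [show (fun i => u i) = fun i => Real.log (a i) from rfl] at *
    rw [hlogsum a ha_pos k, hlogsum b hb_pos k]
    by_cases hk : k ≤ m
    · apply Real.log_le_log
      · exact Finset.prod_pos (fun i _ => ha_pos i)
      · exact hlog k hk
    · push_neg at hk
      rw [hfilter_univ k hk.le, hprod_eq]
  have htot : ∑ i, u i = ∑ i, v i := by
    have h1 := hlogsum a ha_pos m
    have h2 := hlogsum b hb_pos m
    rw [hfilter_univ m le_rfl] at h1 h2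
    rw [show (∑ i, u i) = ∑ i : Fin m, Real.log (a i) from rfl, h1,
      show (∑ i, v i) = ∑ i : Fin m, Real.log (b i) from rfl, h2, hprod_eq]
  have hNuv : N (dC (fun i => Real.exp (u i))) = N (dC (fun i => Real.exp (v i))) := by
    rw [← hau, ← hbv]
    rw [← N_eq_dC N hN_ui A hA.1, ← N_eq_dC N hN_ui B hB.1]
    exact hNAB
  have huv : u = v := key N hN_add hN_smul hN_ui hN_strict u v hu_anti hv_anti hpart htot hNuv
  have hab : a = b := by
    rw [hau, hbv, huv]
  refine ⟨hab, fun f => ?_⟩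
  rw [hab]
end

section
/- Let $A, B$ be $m\times m$ positive definite matrices and suppose $\mathrm{Tr}(A^tB^t) = \mathrm{Tr}\,e^{t(\log A + \log B)}$ for all $t$ in some interval $(0, \varepsilon)$ with $\varepsilon > 0$. Then $AB = BA$. -/
open scoped Matrix.Norms.L2Operator
open scoped Matrix
open scoped ComplexOrder

open Paper

section Aux

open NormedSpace

variable {n : Type*} [Fintype n] [DecidableEq n]

lemma Aux.expc (x : ℝ) : exp ((x : ℂ)) = ((Real.exp x : ℝ) : ℂ) := by
  rw [← ofReal_exp_ℝ_ℝ, Real.exp_eq_exp_ℝ]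

lemma Aux.exp_pi (v : n → ℝ) :
    exp (fun i => ((v i : ℝ) : ℂ)) = fun i => ((Real.exp (v i) : ℝ) : ℂ) :=
  funext fun i => by rw [Pi.coe_exp]; exact Aux.expc _

lemma Aux.unitary_isUnit {M : Matrix n n ℂ} (hM : M.IsHermitian) :
    IsUnit (hM.eigenvectorUnitary : Matrix n n ℂ) :=
  ⟨⟨_, (hM.eigenvectorUnitary : Matrix n n ℂ)ᴴ,
    by simpa [Matrix.star_eq_conjTranspose] using (Unitary.mem_iff.mp hM.eigenvectorUnitary.2).2,
    by simpa [Matrix.star_eq_conjTranspose] using (Unitary.mem_iff.mp hM.eigenvectorUnitary.2).1⟩,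
    rfl⟩

lemma Aux.unitary_inv {M : Matrix n n ℂ} (hM : M.IsHermitian) :
    (hM.eigenvectorUnitary : Matrix n n ℂ)⁻¹ = (hM.eigenvectorUnitary : Matrix n n ℂ)ᴴ :=
  Matrix.inv_eq_left_inv (by
    simpa [Matrix.star_eq_conjTranspose] using (Unitary.mem_iff.mp hM.eigenvectorUnitary.2).1)

lemma Aux.spectral' {M : Matrix n n ℂ} (hM : M.IsHermitian) :
    M = (hM.eigenvectorUnitary : Matrix n n ℂ) *
      Matrix.diagonal (fun i => (hM.eigenvalues i : ℂ)) *
      (hM.eigenvectorUnitary : Matrix n n ℂ)⁻¹ := by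
  rw [Aux.unitary_inv hM, ← Matrix.star_eq_conjTranspose]
  convert hM.spectral_theorem using 2
  rw [Unitary.conjStarAlgAut_apply]; rfl

lemma Aux.mfun_isHermitian {f : ℝ → ℝ} {M : Matrix n n ℂ} (hM : M.IsHermitian) :
    (mfun f M).IsHermitian := by
  rw [mfun, dif_pos hM]
  refine Matrix.isHermitian_mul_mul_conjTranspose _ ?_
  rw [Matrix.isHermitian_diagonal_iff]
  intro i
  exact Complex.conj_ofReal _

lemma Aux.mexp_eq {M : Matrix n n ℂ} (hM : M.IsHermitian) : mexp M = exp M := by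
  rw [mexp, mfun, dif_pos hM]
  conv_rhs => rw [Aux.spectral' hM]
  rw [Matrix.exp_conj _ _ (Aux.unitary_isUnit hM), Matrix.exp_diagonal,
    Aux.unitary_inv hM, Aux.exp_pi]

lemma Aux.smul_spectral {M : Matrix n n ℂ} (hM : M.IsHermitian) (f : ℝ → ℝ) (t : ℝ) :
    t • mfun f M = (hM.eigenvectorUnitary : Matrix n n ℂ) *
      Matrix.diagonal (fun i => ((t * f (hM.eigenvalues i) : ℝ) : ℂ)) *
      (hM.eigenvectorUnitary : Matrix n n ℂ)⁻¹ := by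
  have hfun : (fun i => ((t * f (hM.eigenvalues i) : ℝ) : ℂ)) =
      t • fun i => ((f (hM.eigenvalues i) : ℝ) : ℂ) := by
    funext i; simp [Complex.real_smul]
  rw [mfun, dif_pos hM, Aux.unitary_inv hM, ← smul_mul_assoc, ← mul_smul_comm, hfun,
    ← Matrix.diagonal_smul]

lemma Aux.mpow_eq {A : Matrix n n ℂ} (hA : A.PosDef) (t : ℝ) :
    mpow A t = exp (t • mlog A) := by
  rw [mlog, Aux.smul_spectral hA.1 Real.log t,
    Matrix.exp_conj _ _ (Aux.unitary_isUnit hA.1), Matrix.exp_diagonal,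
    mpow, mfun, dif_pos hA.1, Aux.unitary_inv hA.1, Aux.exp_pi]
  have hfun : (fun i => ((hA.1.eigenvalues i ^ t : ℝ) : ℂ)) =
      fun i => ((Real.exp (t * Real.log (hA.1.eigenvalues i)) : ℝ) : ℂ) := by
    funext i; rw [Real.rpow_def_of_pos (hA.eigenvalues_pos i), mul_comm]
  rw [hfun]

lemma Aux.mpow_one {A : Matrix n n ℂ} (hA : A.PosDef) : mpow A 1 = A := by
  rw [mpow, mfun, dif_pos hA.1]
  conv_rhs => rw [Aux.spectral' hA.1]
  rw [Aux.unitary_inv hA.1]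
  have hfun : (fun i => ((hA.1.eigenvalues i ^ (1:ℝ) : ℝ) : ℂ)) =
      fun i => ((hA.1.eigenvalues i : ℝ) : ℂ) := by
    funext i; rw [Real.rpow_one]
  rw [hfun]

lemma Aux.smul_isHermitian {M : Matrix n n ℂ} (hM : M.IsHermitian) (t : ℝ) :
    (t • M).IsHermitian := by
  have h2 : (t • M)ᴴ = t • Mᴴ := by
    ext i j
    simp [Matrix.conjTranspose_apply, star_smul]
  show (t • M)ᴴ = t • M
  rw [h2, hM.eq]

lemma Aux.hasDerivAt_traceExpMul (H K : Matrix n n ℂ) (a b : ℕ) (t : ℝ) :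
    HasDerivAt (fun s : ℝ => ((H ^ a * exp (s • H)) * (K ^ b * exp (s • K))).trace)
      (((H ^ (a+1) * exp (t • H)) * (K ^ b * exp (t • K))).trace
        + ((H ^ a * exp (t • H)) * (K ^ (b+1) * exp (t • K))).trace) t := by
  have hH : HasDerivAt (fun s : ℝ => H ^ a * exp (s • H))
      (H ^ (a+1) * exp (t • H)) t := by
    have := (hasDerivAt_exp_smul_const H t).const_mul (H ^ a)
    refine this.congr_deriv ?_
    rw [((Commute.refl H).smul_left t).exp_left |>.eq, ← mul_assoc, ← pow_succ]
  have hK : HasDerivAt (fun s : ℝ => K ^ b * exp (s • K))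
      (K ^ (b+1) * exp (t • K)) t := by
    have := (hasDerivAt_exp_smul_const K t).const_mul (K ^ b)
    refine this.congr_deriv ?_
    rw [((Commute.refl K).smul_left t).exp_left |>.eq, ← mul_assoc, ← pow_succ]
  have hmul := hH.mul hK
  set L : Matrix n n ℂ →L[ℝ] ℂ :=
    LinearMap.toContinuousLinearMap ((Matrix.traceLinearMap n ℂ ℂ).restrictScalars ℝ) with hL
  have := L.hasFDerivAt.comp_hasDerivAt t hmul
  simp only [hL, Function.comp_def, LinearMap.coe_toContinuousLinearMap',
    LinearMap.restrictScalars_apply, Matrix.traceLinearMap_apply, map_add] at this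
  exact this

lemma Aux.hasDerivAt_traceExp (M : Matrix n n ℂ) (c : ℕ) (t : ℝ) :
    HasDerivAt (fun s : ℝ => (M ^ c * exp (s • M)).trace)
      ((M ^ (c+1) * exp (t • M)).trace) t := by
  have hM : HasDerivAt (fun s : ℝ => M ^ c * exp (s • M))
      (M ^ (c+1) * exp (t • M)) t := by
    have := (hasDerivAt_exp_smul_const M t).const_mul (M ^ c)
    refine this.congr_deriv ?_
    rw [((Commute.refl M).smul_left t).exp_left |>.eq, ← mul_assoc, ← pow_succ]
  set L : Matrix n n ℂ →L[ℝ] ℂ :=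
    LinearMap.toContinuousLinearMap ((Matrix.traceLinearMap n ℂ ℂ).restrictScalars ℝ) with hL
  have := L.hasFDerivAt.comp_hasDerivAt t hM
  simp only [hL, Function.comp_def, LinearMap.coe_toContinuousLinearMap',
    LinearMap.restrictScalars_apply, Matrix.traceLinearMap_apply] at this
  convert this using 2

lemma Aux.zero_chain {F G : ℝ → ℂ} {ε : ℝ} (hd : ∀ t, HasDerivAt F (G t) t)
    (h0 : ∀ t ∈ Set.Ioo (0:ℝ) ε, F t = 0) : ∀ t ∈ Set.Ioo (0:ℝ) ε, G t = 0 := by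
  intro t ht
  have hev : F =ᶠ[nhds t] (fun _ => (0:ℂ)) := by
    filter_upwards [Ioo_mem_nhds ht.1 ht.2] with s hs using h0 s hs
  have h1 : deriv F t = 0 := by rw [hev.deriv_eq]; simp
  rw [← (hd t).deriv]; exact h1

lemma Aux.eq_zero_of_trace_conjTranspose_mul_self {X : Matrix n n ℂ}
    (h : (Xᴴ * X).trace = 0) : X = 0 := by
  have h2 : (Xᴴ * X).trace = ((∑ i, ∑ j, Complex.normSq (X j i) : ℝ) : ℂ) := by
    rw [Matrix.trace]
    push_cast
    refine Finset.sum_congr rfl fun i _ => ?_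
    rw [Matrix.diag_apply, Matrix.mul_apply]
    refine Finset.sum_congr rfl fun j _ => ?_
    simp [Matrix.conjTranspose_apply, Complex.star_def, ← Complex.normSq_eq_conj_mul_self]
  rw [h2] at h
  have h1 : ∑ i, ∑ j, Complex.normSq (X j i) = 0 := by exact_mod_cast h
  ext a b
  have h3 := (Finset.sum_eq_zero_iff_of_nonneg
    (fun i _ => Finset.sum_nonneg fun j _ => Complex.normSq_nonneg _)).mp h1 b (Finset.mem_univ _)
  have h4 := (Finset.sum_eq_zero_iff_of_nonneg
    (fun j _ => Complex.normSq_nonneg _)).mp h3 a (Finset.mem_univ _)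
  simpa using Complex.normSq_eq_zero.mp h4

end Aux

theorem stmt17 {m : ℕ} (A B : Matrix (Fin m) (Fin m) ℂ)
    (hA : A.PosDef) (hB : B.PosDef) (ε : ℝ) (hε : 0 < ε)
    (h : ∀ t ∈ Set.Ioo (0 : ℝ) ε,
      (mpow A t * mpow B t).trace = (mexp (t • (mlog A + mlog B))).trace) :
    A * B = B * A := by
  classical
  have hH : (mlog A).IsHermitian := Aux.mfun_isHermitian hA.1
  have hK : (mlog B).IsHermitian := Aux.mfun_isHermitian hB.1
  set H := mlog A with hHdef
  set K := mlog B with hKdef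
  set g : ℕ → ℕ → ℝ → ℂ := fun a b s =>
    ((H ^ a * NormedSpace.exp (s • H)) * (K ^ b * NormedSpace.exp (s • K))).trace with hgdef
  set e : ℕ → ℝ → ℂ := fun c s =>
    ((H + K) ^ c * NormedSpace.exp (s • (H + K))).trace with hedef
  have hgd : ∀ (a b : ℕ) (t : ℝ), HasDerivAt (g a b) (g (a+1) b t + g a (b+1) t) t :=
    fun a b t => Aux.hasDerivAt_traceExpMul H K a b t
  have hed : ∀ (c : ℕ) (t : ℝ), HasDerivAt (e c) (e (c+1) t) t :=
    fun c t => Aux.hasDerivAt_traceExp (H + K) c t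
  have hD0 : ∀ t ∈ Set.Ioo (0:ℝ) ε, g 0 0 t - e 0 t = 0 := by
    intro t ht
    have h0 := h t ht
    rw [Aux.mpow_eq hA, Aux.mpow_eq hB,
      Aux.mexp_eq (Aux.smul_isHermitian (hH.add hK) t)] at h0
    simp only [hgdef, hedef, pow_zero, one_mul]
    rw [h0, sub_self]
  have hD1 : ∀ t ∈ Set.Ioo (0:ℝ) ε, (g 1 0 t + g 0 1 t) - e 1 t = 0 := by
    refine Aux.zero_chain (fun t => ?_) hD0
    exact (hgd 0 0 t).sub (hed 0 t)
  have hD2 : ∀ t ∈ Set.Ioo (0:ℝ) ε,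
      (g 2 0 t + 2 * g 1 1 t + g 0 2 t) - e 2 t = 0 := by
    refine Aux.zero_chain (fun t => ?_) hD1
    have := ((hgd 1 0 t).add (hgd 0 1 t)).sub (hed 1 t)
    refine this.congr_deriv ?_
    norm_num
    ring
  have hD3 : ∀ t ∈ Set.Ioo (0:ℝ) ε,
      (g 3 0 t + 3 * g 2 1 t + 3 * g 1 2 t + g 0 3 t) - e 3 t = 0 := by
    refine Aux.zero_chain (fun t => ?_) hD2
    have := (((hgd 2 0 t).add ((hgd 1 1 t).const_mul (2:ℂ))).add (hgd 0 2 t)).sub (hed 2 t)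
    refine this.congr_deriv ?_
    norm_num
    ring
  have hD4 : ∀ t ∈ Set.Ioo (0:ℝ) ε,
      (g 4 0 t + 4 * g 3 1 t + 6 * g 2 2 t + 4 * g 1 3 t + g 0 4 t) - e 4 t = 0 := by
    refine Aux.zero_chain (fun t => ?_) hD3
    have := ((((hgd 3 0 t).add ((hgd 2 1 t).const_mul (3:ℂ))).add
      ((hgd 1 2 t).const_mul (3:ℂ))).add (hgd 0 3 t)).sub (hed 3 t)
    refine this.congr_deriv ?_
    norm_num
    ring
  -- take the limit t → 0⁺
  have hcont : ContinuousAt (fun s =>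
      (g 4 0 s + 4 * g 3 1 s + 6 * g 2 2 s + 4 * g 1 3 s + g 0 4 s) - e 4 s) 0 := by
    have c : ∀ a b : ℕ, ContinuousAt (g a b) 0 := fun a b => (hgd a b 0).continuousAt
    have ce : ContinuousAt (e 4) 0 := (hed 4 0).continuousAt
    exact (((((c 4 0).add (continuousAt_const.mul (c 3 1))).add
      (continuousAt_const.mul (c 2 2))).add
      (continuousAt_const.mul (c 1 3))).add (c 0 4)).sub ce
  have hval : (g 4 0 0 + 4 * g 3 1 0 + 6 * g 2 2 0 + 4 * g 1 3 0 + g 0 4 0) - e 4 0 = 0 := by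
    have h0mem : Set.Ioo (0:ℝ) ε ∈ nhdsWithin (0:ℝ) (Set.Ioi 0) :=
      Ioo_mem_nhdsGT_of_mem ⟨le_refl 0, hε⟩
    have hlim := hcont.continuousWithinAt (s := Set.Ioi (0:ℝ))
    have h2 : Filter.Tendsto (fun s =>
        (g 4 0 s + 4 * g 3 1 s + 6 * g 2 2 s + 4 * g 1 3 s + g 0 4 s) - e 4 s)
        (nhdsWithin (0:ℝ) (Set.Ioi 0)) (nhds 0) := by
      refine Filter.Tendsto.congr' ?_ tendsto_const_nhds
      filter_upwards [h0mem] with t ht using (hD4 t ht).symm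
    exact tendsto_nhds_unique hlim h2
  -- evaluate at 0
  simp only [hgdef, hedef, zero_smul, NormedSpace.exp_zero, mul_one, pow_zero, one_mul] at hval
  -- expand powers into words
  have p2 : ∀ X : Matrix (Fin m) (Fin m) ℂ, X ^ (2:ℕ) = X * X := fun X => pow_two X
  have p3 : ∀ X : Matrix (Fin m) (Fin m) ℂ, X ^ (3:ℕ) = X * (X * X) := fun X => by
    rw [(pow_succ X 2 : X ^ (3:ℕ) = X ^ 2 * X), pow_two, mul_assoc]
  have p4 : ∀ X : Matrix (Fin m) (Fin m) ℂ, X ^ (4:ℕ) = X * (X * (X * X)) := fun X => by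
    rw [(pow_succ X 3 : X ^ (4:ℕ) = X ^ 3 * X), p3 X, mul_assoc, mul_assoc]
  simp only [p2, p3, p4, pow_one, add_mul, mul_add, Matrix.trace_add, mul_assoc] at hval
  have r3 : ∀ X Y Z W : Matrix (Fin m) (Fin m) ℂ,
      (X * (Y * (Z * W))).trace = (Y * (Z * (W * X))).trace := by
    intro X Y Z W
    rw [Matrix.trace_mul_comm X (Y * (Z * W))]
    simp only [mul_assoc]
  rw [r3 H H K H, r3 H K H H, r3 K H H H,
      r3 H K K H, r3 K K H H, r3 K H H K,
      r3 K H K H,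
      r3 K K K H, r3 K K H K, r3 K H K K] at hval
  have hbc : (H * (H * (K * K))).trace = (H * (K * (H * K))).trace := by
    linear_combination hval / 2
  -- conclude commutation of H and K
  have hCH : (H * K - K * H)ᴴ = K * H - H * K := by
    rw [Matrix.conjTranspose_sub, Matrix.conjTranspose_mul, Matrix.conjTranspose_mul,
      hH.eq, hK.eq]
  have htr : ((H * K - K * H)ᴴ * (H * K - K * H)).trace = 0 := by
    rw [hCH]
    simp only [Matrix.sub_mul, Matrix.mul_sub, Matrix.trace_sub, mul_assoc]
    rw [r3 K H H K, r3 K H K H, r3 H K K H, r3 K K H H, r3 K H H K]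
    linear_combination 2 * hbc
  have hC0 : H * K - K * H = 0 := Aux.eq_zero_of_trace_conjTranspose_mul_self htr
  have hcomm : Commute H K := sub_eq_zero.mp hC0
  have hAe : A = NormedSpace.exp H := by
    rw [← Aux.mpow_one hA, Aux.mpow_eq hA 1, one_smul]
  have hBe : B = NormedSpace.exp K := by
    rw [← Aux.mpow_one hB, Aux.mpow_eq hB 1, one_smul]
  rw [hAe, hBe]
  exact hcomm.exp.eq
end
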